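/- Let ρ₊ and ρ₋ be qubit density matrices given by ρ± = U±(t) ρ₀ U±(t)† where U±(t) = exp(∓(i/2) g t σ_z) and ρ₀ is a qubit state with eigenvalue λ ∈ [0,1] whose eigenbasis is rotated from the σ_z basis by Euler angle β (i.e., ρ₀ = R [[λ,0],[0,1−λ]] R† with R a rotation by β about the y-axis, up to phases). Then the fidelity satisfies B(ρ₊(t), ρ₋(t)) = √(1 − (2λ−1)² sin²β sin²(g t)). -/

import Mathlib

open Matrix Real Complex ComplexOrder Filter

noncomputable def traceNorm {n : Type*} [Fintype n] [DecidableEq n] (A : Matrix n n ℂ) : ℝ :=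
  ∑ i, Real.sqrt ((Matrix.posSemidef_conjTranspose_mul_self A).isHermitian.eigenvalues i)

def IsDensity {n : Type*} [Fintype n] [DecidableEq n] (ρ : Matrix n n ℂ) : Prop :=
  ρ.PosSemidef ∧ ρ.trace = 1

noncomputable def matSqrt {n : Type*} [Fintype n] [DecidableEq n] (A : Matrix n n ℂ) : Matrix n n ℂ :=
  open scoped Classical in
  if h : A.PosSemidef then (h.1.eigenvectorUnitary : Matrix n n ℂ) * diagonal ((↑) ∘ (√·) ∘ h.1.eigenvalues) *
    (star h.1.eigenvectorUnitary : Matrix n n ℂ) else 0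

noncomputable def fidelity {n : Type*} [Fintype n] [DecidableEq n] (ρ σ : Matrix n n ℂ) : ℝ :=
  traceNorm (matSqrt ρ * matSqrt σ)

noncomputable def Rz (x : ℝ) : Matrix (Fin 2) (Fin 2) ℂ :=
  !![Complex.exp (-(x/2 : ℝ) * Complex.I), 0; 0, Complex.exp ((x/2 : ℝ) * Complex.I)]

noncomputable def Ry (x : ℝ) : Matrix (Fin 2) (Fin 2) ℂ :=
  !![(Real.cos (x/2) : ℂ), -(Real.sin (x/2) : ℂ); (Real.sin (x/2) : ℂ), (Real.cos (x/2) : ℂ)]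

noncomputable def eulerRot (α β γ : ℝ) : Matrix (Fin 2) (Fin 2) ℂ := Rz α * Ry β * Rz γ

noncomputable def rho0 (α β γ l : ℝ) : Matrix (Fin 2) (Fin 2) ℂ :=
  eulerRot α β γ * Matrix.diagonal ![(l : ℂ), (1 - l : ℂ)] * (eulerRot α β γ)ᴴ

/-!
For qubit states the eigenvalues `μ₁, μ₂` of `(√ρ√σ)ᴴ(√ρ√σ) = √σ ρ √σ` satisfy
`μ₁ + μ₂ = tr(ρσ)` and `μ₁μ₂ = det ρ · det σ`, so
`B(ρ, σ)² = (√μ₁ + √μ₂)² = tr(ρσ) + 2√(det ρ det σ)`.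
Both states are conjugates of `M = R_y(β) diag(λ, 1-λ) R_y(β)ᴴ` by `R_z` rotations, so
`det ρ± = λ(1-λ)` and `tr(ρ₊ρ₋) = tr(M · R_z(-2gt) M R_z(-2gt)ᴴ)`; the `R_z` conjugation
multiplies the off-diagonal entry `(2λ-1) sin β / 2` of `M` by a phase, which gives the
`cos (2gt)` term.
-/

section

variable {n : Type*} [Fintype n] [DecidableEq n]

open scoped MatrixOrder

theorem matSqrt_eq_cfcSqrt {A : Matrix n n ℂ} (hA : A.PosSemidef) : matSqrt A = CFC.sqrt A := by
  have hsqrt : (fun x : ℝ => ((NNReal.sqrt x.toNNReal : NNReal) : ℝ)) = Real.sqrt := by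
    funext x; rw [Real.sqrt]
  rw [CFC.sqrt_eq_cfc, cfc_nnreal_eq_real _ A hA.nonneg, hA.1.cfc_eq, matSqrt, dif_pos hA, hsqrt,
    IsHermitian.cfc, Unitary.conjStarAlgAut_apply]
  rfl

theorem posSemidef_matSqrt {A : Matrix n n ℂ} (hA : A.PosSemidef) : (matSqrt A).PosSemidef := by
  rw [matSqrt_eq_cfcSqrt hA, ← Matrix.nonneg_iff_posSemidef]
  exact CFC.sqrt_nonneg A

theorem matSqrt_mul_self {A : Matrix n n ℂ} (hA : A.PosSemidef) : matSqrt A * matSqrt A = A := by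
  rw [matSqrt_eq_cfcSqrt hA]
  exact CFC.sqrt_mul_sqrt_self A hA.nonneg

theorem det_mul_mul_conjTranspose {U : Matrix n n ℂ} (hU : U * Uᴴ = 1) (A : Matrix n n ℂ) :
    (U * A * Uᴴ).det = A.det := by
  rw [det_mul, det_mul, mul_right_comm, ← det_mul, hU, det_one, one_mul]

end

theorem traceNorm_fin_two (A : Matrix (Fin 2) (Fin 2) ℂ) :
    traceNorm A = √((Aᴴ * A).trace.re + 2 * √((Aᴴ * A).det.re)) := by
  have hA := posSemidef_conjTranspose_mul_self A
  set e := hA.isHermitian.eigenvalues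
  have he0 : 0 ≤ e 0 := hA.eigenvalues_nonneg 0
  have he1 : 0 ≤ e 1 := hA.eigenvalues_nonneg 1
  have htrace : (Aᴴ * A).trace.re = e 0 + e 1 := by
    simp [hA.isHermitian.trace_eq_sum_eigenvalues, Fin.sum_univ_two, e]
  have hdet : (Aᴴ * A).det.re = e 0 * e 1 := by
    simp [hA.isHermitian.det_eq_prod_eigenvalues, Fin.prod_univ_two, ← ofReal_mul, e]
  rw [htrace, hdet, traceNorm, Fin.sum_univ_two, sqrt_mul he0, eq_comm,
    sqrt_eq_iff_mul_self_eq (by positivity) (by positivity)]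
  nlinarith [mul_self_sqrt he0, mul_self_sqrt he1]

theorem fidelity_fin_two {ρ σ : Matrix (Fin 2) (Fin 2) ℂ} (hρ : ρ.PosSemidef)
    (hσ : σ.PosSemidef) :
    fidelity ρ σ = √((ρ * σ).trace.re + 2 * √((ρ.det * σ.det).re)) := by
  have hsq : (matSqrt ρ)ᴴ = matSqrt ρ := (posSemidef_matSqrt hρ).isHermitian
  have hsqσ : (matSqrt σ)ᴴ = matSqrt σ := (posSemidef_matSqrt hσ).isHermitian
  have hgram :
      (matSqrt ρ * matSqrt σ)ᴴ * (matSqrt ρ * matSqrt σ) = matSqrt σ * ρ * matSqrt σ := by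
    rw [conjTranspose_mul, hsq, hsqσ, mul_assoc, ← mul_assoc (matSqrt ρ), matSqrt_mul_self hρ,
      mul_assoc]
  rw [fidelity, traceNorm_fin_two, hgram, trace_mul_comm, ← mul_assoc, matSqrt_mul_self hσ,
    trace_mul_comm, det_mul, det_mul, mul_right_comm, ← det_mul, matSqrt_mul_self hσ,
    mul_comm σ.det]

theorem Rz_eq_diagonal (x : ℝ) :
    Rz x = diagonal ![Complex.exp (-(x / 2 : ℝ) * I), Complex.exp ((x / 2 : ℝ) * I)] := by
  ext i j
  fin_cases i <;> fin_cases j <;> simp [Rz]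

theorem Rz_mul_Rz (x y : ℝ) : Rz x * Rz y = Rz (x + y) := by
  rw [Rz_eq_diagonal, Rz_eq_diagonal, Rz_eq_diagonal, diagonal_mul_diagonal]
  congr 1
  ext i
  fin_cases i <;> simp [← Complex.exp_add] <;> ring_nf

theorem Rz_conjTranspose (x : ℝ) : (Rz x)ᴴ = Rz (-x) := by
  rw [Rz_eq_diagonal, Rz_eq_diagonal, diagonal_conjTranspose]
  congr 1
  ext i
  fin_cases i <;> simp [← Complex.exp_conj, map_ofNat] <;> ring_nf

theorem Rz_mul_conjTranspose_self (x : ℝ) : Rz x * (Rz x)ᴴ = 1 := by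
  rw [Rz_conjTranspose, Rz_mul_Rz, add_neg_cancel, Rz_eq_diagonal, ← diagonal_one]
  congr 1
  ext i
  fin_cases i <;> simp

theorem Rz_conj_Rz_conj (x y : ℝ) (A : Matrix (Fin 2) (Fin 2) ℂ) :
    Rz x * (Rz y * A * (Rz y)ᴴ) * (Rz x)ᴴ = Rz (x + y) * A * (Rz (x + y))ᴴ := by
  simp only [← Rz_mul_Rz, conjTranspose_mul, mul_assoc]

theorem trace_Rz_conj_mul_Rz_conj (x y : ℝ) (A B : Matrix (Fin 2) (Fin 2) ℂ) :
    ((Rz x * A * (Rz x)ᴴ) * (Rz y * B * (Rz y)ᴴ)).trace =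
      (A * (Rz (y - x) * B * (Rz (y - x))ᴴ)).trace := by
  have hyx : Rz (y - x) = (Rz x)ᴴ * Rz y := by rw [Rz_conjTranspose, Rz_mul_Rz, neg_add_eq_sub]
  rw [hyx]
  simp only [conjTranspose_mul, conjTranspose_conjTranspose, mul_assoc]
  rw [trace_mul_comm]
  simp only [mul_assoc]

theorem trace_mul_Rz_conj (a b c φ : ℝ) :
    (!![(a : ℂ), b; b, c] * (Rz φ * !![(a : ℂ), b; b, c] * (Rz φ)ᴴ)).trace.re =
      a ^ 2 + c ^ 2 + 2 * b ^ 2 * Real.cos φ := by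
  obtain ⟨h, rfl⟩ : ∃ h, φ = 2 * h := ⟨φ / 2, by ring⟩
  rw [Rz_conjTranspose, Rz_eq_diagonal, Rz_eq_diagonal, diagonal_fin_two, diagonal_fin_two]
  simp only [mul_fin_two, trace_fin_two_of, Matrix.cons_val_zero, Matrix.cons_val_one]
  simp [Complex.exp_re, Complex.exp_im, neg_div, mul_div_cancel_left₀, Real.cos_two_mul']
  linear_combination (a ^ 2 + c ^ 2) * Real.sin_sq_add_cos_sq h

theorem rho0_eq_Rz_conj (α β γ l : ℝ) :
    rho0 α β γ l =
      Rz α * (Ry β * diagonal ![(l : ℂ), (1 - l : ℂ)] * (Ry β)ᴴ) * (Rz α)ᴴ := by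
  have hγ :
      Rz γ * diagonal ![(l : ℂ), (1 - l : ℂ)] * (Rz γ)ᴴ = diagonal ![(l : ℂ), (1 - l : ℂ)] := by
    rw [Rz_eq_diagonal, (commute_diagonal _ _).eq, mul_assoc, ← Rz_eq_diagonal,
      Rz_mul_conjTranspose_self, mul_one]
  rw [rho0, eulerRot]
  conv_rhs => rw [← hγ]
  simp only [conjTranspose_mul, mul_assoc]

theorem Ry_mul_conjTranspose_self (x : ℝ) : Ry x * (Ry x)ᴴ = 1 := by
  have hpyth : (Real.sin (x / 2) : ℂ) ^ 2 + (Real.cos (x / 2) : ℂ) ^ 2 = 1 := by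
    exact_mod_cast Real.sin_sq_add_cos_sq (x / 2)
  ext i j
  fin_cases i <;> fin_cases j <;>
    simp [Ry, mul_apply, Fin.sum_univ_two, -Complex.ofReal_cos, -Complex.ofReal_sin] <;>
    first | ring1 | linear_combination hpyth

theorem Ry_conj_diagonal (β l : ℝ) :
    Ry β * diagonal ![(l : ℂ), (1 - l : ℂ)] * (Ry β)ᴴ =
      !![(((1 + (2 * l - 1) * Real.cos β) / 2 : ℝ) : ℂ),
          (((2 * l - 1) * Real.sin β / 2 : ℝ) : ℂ);
        (((2 * l - 1) * Real.sin β / 2 : ℝ) : ℂ),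
          (((1 - (2 * l - 1) * Real.cos β) / 2 : ℝ) : ℂ)] := by
  obtain ⟨h, rfl⟩ : ∃ h, β = 2 * h := ⟨β / 2, by ring⟩
  have hpyth : (Real.sin h : ℂ) ^ 2 + (Real.cos h : ℂ) ^ 2 = 1 := by
    exact_mod_cast Real.sin_sq_add_cos_sq h
  rw [Real.cos_two_mul', Real.sin_two_mul, Ry, mul_div_cancel_left₀ _ two_ne_zero,
    diagonal_fin_two]
  ext i j
  fin_cases i <;> fin_cases j <;>
    simp [mul_apply, Fin.sum_univ_two, -Complex.ofReal_cos, -Complex.ofReal_sin] <;>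
    first | ring1 | linear_combination hpyth / 2

theorem posSemidef_diagonal_of_mem_Icc {l : ℝ} (hl : l ∈ Set.Icc (0 : ℝ) 1) :
    (diagonal ![(l : ℂ), (1 - l : ℂ)]).PosSemidef := by
  refine posSemidef_diagonal_iff.mpr fun i => ?_
  fin_cases i
  · simpa using hl.1
  · simpa [← ofReal_one, ← ofReal_sub] using hl.2

theorem spin_fidelity (α β γ l g t : ℝ) (hl : l ∈ Set.Icc (0:ℝ) 1) :
    fidelity (Rz (g * t) * rho0 α β γ l * (Rz (g * t))ᴴ)
             (Rz (-(g * t)) * rho0 α β γ l * (Rz (-(g * t)))ᴴ)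
      = Real.sqrt (1 - (2*l - 1)^2 * Real.sin β ^ 2 * Real.sin (g * t) ^ 2) := by
  have hM := (posSemidef_diagonal_of_mem_Icc hl).mul_mul_conjTranspose_same (Ry β)
  have hdetM :
      (Ry β * diagonal ![(l : ℂ), (1 - l : ℂ)] * (Ry β)ᴴ).det = ((l * (1 - l) : ℝ) : ℂ) := by
    simp [det_mul_mul_conjTranspose (Ry_mul_conjTranspose_self β)]
  rw [rho0_eq_Rz_conj, Rz_conj_Rz_conj, Rz_conj_Rz_conj,
    fidelity_fin_two (hM.mul_mul_conjTranspose_same _) (hM.mul_mul_conjTranspose_same _),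
    trace_Rz_conj_mul_Rz_conj, det_mul_mul_conjTranspose (Rz_mul_conjTranspose_self _),
    det_mul_mul_conjTranspose (Rz_mul_conjTranspose_self _), hdetM, Ry_conj_diagonal,
    trace_mul_Rz_conj, ← ofReal_mul, ofReal_re, ← sq, sqrt_sq (by nlinarith [hl.1, hl.2])]
  congr 1
  rw [show -(g * t) + α - (g * t + α) = -(2 * (g * t)) by ring, Real.cos_neg,
    Real.cos_two_mul_eq_one_sub]
  linear_combination (2 * l - 1) ^ 2 / 2 * Real.sin_sq_add_cos_sq β
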